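/- arXiv:1303.0416 — 4 statements merged into one kernel-verified Lean document; each statement's English description precedes it below -/
import Mathlib

section
/- For integers $l \ge 2$, $N \ge 2$ and real $v$ with $1 < v < l/(l-1)$, there exist constants $c_1, c_2 > 0$ depending only on $l$ and $v$ such that $c_1 N^l \le \sum_{k=0}^{N-1} \left( \frac{N^v - (k+1)^v}{(k+1)^v - k^v} \right)^{l-1} + 1 \le c_2 N^l$. -/
open Real Finset

/-!
Convexity of `x ↦ x ^ v` bounds each summand's base from both sides:
`N - (k + 1) ≤ (N ^ v - (k + 1) ^ v) / ((k + 1) ^ v - k ^ v) ≤ N ^ v / (k + 1) ^ (v - 1)`.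
The lower bound reduces the sum to `∑ j ^ (l - 1) ≍ N ^ l`. The upper bound gives
`N ^ (v (l - 1)) ∑ (k + 1) ^ (-(v - 1)(l - 1))`, and `v < l / (l - 1)` says exactly that the
exponent `(v - 1)(l - 1)` is below `1`, so this sum is `O(N ^ (1 - (v - 1)(l - 1)))` and the
total is `O(N ^ l)`.
-/

theorem rpow_add_mul_rpow_sub_one_mul_sub_le {p x y : ℝ} (hp : 1 ≤ p) (hx : 0 ≤ x)
    (hy : 0 < y) :
    y ^ p + p * y ^ (p - 1) * (x - y) ≤ x ^ p := by
  have h := one_add_mul_self_le_rpow_one_add (s := x / y - 1)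
    (by linarith [div_nonneg hx hy.le]) hp
  rw [add_sub_cancel, div_rpow hx hy.le, le_div_iff₀ (rpow_pos_of_pos hy p)] at h
  have : y ^ p + p * y ^ (p - 1) * (x - y) = (1 + p * (x / y - 1)) * y ^ p := by
    rw [rpow_sub_one hy.ne']; field_simp
  linarith

theorem rpow_le_rpow_add_mul_rpow_sub_one_mul_sub {p x y : ℝ} (hp0 : 0 ≤ p) (hp1 : p ≤ 1)
    (hx : 0 ≤ x) (hy : 0 < y) :
    x ^ p ≤ y ^ p + p * y ^ (p - 1) * (x - y) := by
  have h := rpow_one_add_le_one_add_mul_self (s := x / y - 1)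
    (by linarith [div_nonneg hx hy.le]) hp0 hp1
  rw [add_sub_cancel, div_rpow hx hy.le, div_le_iff₀ (rpow_pos_of_pos hy p)] at h
  have : y ^ p + p * y ^ (p - 1) * (x - y) = (1 + p * (x / y - 1)) * y ^ p := by
    rw [rpow_sub_one hy.ne']; field_simp
  linarith

theorem rpow_sub_one_mul_sub_le_rpow_sub_rpow {p x y : ℝ} (hp : 1 ≤ p) (hx : 0 ≤ x)
    (hxy : x ≤ y) :
    y ^ (p - 1) * (y - x) ≤ y ^ p - x ^ p := by
  have hsplit : ∀ z : ℝ, 0 ≤ z → z ^ p = z * z ^ (p - 1) := fun z hz => by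
    conv_lhs => rw [← add_sub_cancel 1 p, rpow_add' hz (by linarith), rpow_one]
  have := rpow_le_rpow hx hxy (by linarith : 0 ≤ p - 1)
  rw [hsplit x hx, hsplit y (hx.trans hxy)]
  nlinarith

theorem add_one_pow_succ_le (m : ℕ) {x : ℝ} (hx : 0 ≤ x) :
    (x + 1) ^ (m + 1) ≤ x ^ (m + 1) + (m + 1) * (x + 1) ^ m := by
  have h := rpow_add_mul_rpow_sub_one_mul_sub_le (p := ((m + 1 : ℕ) : ℝ)) (by simp) hx
    (by positivity : 0 < x + 1)
  rw [rpow_natCast, rpow_natCast, Nat.cast_add_one, add_sub_cancel_right, rpow_natCast] at h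
  linarith

theorem pow_succ_le_mul_sum_range_pow (m n : ℕ) :
    (n : ℝ) ^ (m + 1) ≤ (m + 1) * ∑ j ∈ range (n + 1), (j : ℝ) ^ m := by
  induction n with
  | zero =>
    rw [Nat.cast_zero, zero_pow (Nat.succ_ne_zero m)]
    positivity
  | succ n ih =>
    rw [sum_range_succ, mul_add, Nat.cast_succ]
    linarith [add_one_pow_succ_le m (Nat.cast_nonneg (α := ℝ) n)]

theorem sum_range_add_one_rpow_sub_one_le {p : ℝ} (hp0 : 0 < p) (hp1 : p ≤ 1) (n : ℕ) :
    ∑ k ∈ range n, ((k : ℝ) + 1) ^ (p - 1) ≤ (n : ℝ) ^ p / p := by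
  have hstep (k : ℕ) :
      ((k : ℝ) + 1) ^ (p - 1) * p ≤ ((k + 1 : ℕ) : ℝ) ^ p - (k : ℝ) ^ p := by
    have := rpow_le_rpow_add_mul_rpow_sub_one_mul_sub hp0.le hp1 (Nat.cast_nonneg (α := ℝ) k)
      (by positivity : (0 : ℝ) < k + 1)
    push_cast
    linarith
  rw [le_div_iff₀ hp0, sum_mul]
  calc ∑ k ∈ range n, ((k : ℝ) + 1) ^ (p - 1) * p
      ≤ ∑ k ∈ range n, (((k + 1 : ℕ) : ℝ) ^ p - (k : ℝ) ^ p) :=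
        sum_le_sum fun k _ => hstep k
    _ = (n : ℝ) ^ p := by
      rw [sum_range_sub (fun k : ℕ => (k : ℝ) ^ p), Nat.cast_zero, zero_rpow hp0.ne', sub_zero]

-- Equals `(1 - ((k + 1) / N) ^ v) / h_k`: half the number of cubes of side `h_k` along an edge
-- of the `k`-th layer.
noncomputable def layerEdgeCount (v : ℝ) (N k : ℕ) : ℝ :=
  ((N : ℝ) ^ v - (k + 1 : ℝ) ^ v) / ((k + 1 : ℝ) ^ v - (k : ℝ) ^ v)

section layerEdgeCount

variable {v : ℝ}

theorem rpow_add_one_sub_rpow_pos (hv : 0 < v) (k : ℕ) : 0 < (k + 1 : ℝ) ^ v - (k : ℝ) ^ v :=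
  sub_pos.2 (rpow_lt_rpow (Nat.cast_nonneg k) (lt_add_one _) hv)

theorem layerEdgeCount_nonneg (hv : 0 < v) {N k : ℕ} (hkN : k + 1 ≤ N) :
    0 ≤ layerEdgeCount v N k := by
  refine div_nonneg (sub_nonneg.2 (rpow_le_rpow (by positivity) ?_ hv.le))
    (rpow_add_one_sub_rpow_pos hv k).le
  exact_mod_cast hkN

theorem sub_le_layerEdgeCount (hv : 1 ≤ v) {N k : ℕ} (hkN : k + 1 ≤ N) :
    (N : ℝ) - (k + 1) ≤ layerEdgeCount v N k := by
  have hk : (0 : ℝ) < k + 1 := by positivity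
  have hkN' : (k + 1 : ℝ) ≤ N := by exact_mod_cast hkN
  have hnum := rpow_add_mul_rpow_sub_one_mul_sub_le hv (Nat.cast_nonneg (α := ℝ) N) hk
  have hden := rpow_add_mul_rpow_sub_one_mul_sub_le hv (Nat.cast_nonneg (α := ℝ) k) hk
  rw [layerEdgeCount, le_div_iff₀ (rpow_add_one_sub_rpow_pos (by linarith) k)]
  calc ((N : ℝ) - (k + 1)) * ((k + 1 : ℝ) ^ v - (k : ℝ) ^ v)
      ≤ ((N : ℝ) - (k + 1)) * (v * (k + 1 : ℝ) ^ (v - 1)) :=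
        mul_le_mul_of_nonneg_left (by linarith) (sub_nonneg.2 hkN')
    _ ≤ (N : ℝ) ^ v - (k + 1 : ℝ) ^ v := by linarith

theorem layerEdgeCount_le (hv : 1 ≤ v) (N k : ℕ) :
    layerEdgeCount v N k ≤ (N : ℝ) ^ v / (k + 1 : ℝ) ^ (v - 1) := by
  have hden := rpow_sub_one_mul_sub_le_rpow_sub_rpow hv (Nat.cast_nonneg (α := ℝ) k)
    (by linarith : (k : ℝ) ≤ k + 1)
  rw [add_sub_cancel_left, mul_one] at hden
  have hnum : (N : ℝ) ^ v - (k + 1 : ℝ) ^ v ≤ (N : ℝ) ^ v :=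
    sub_le_self _ (rpow_nonneg (by positivity) v)
  exact div_le_div₀ (by positivity) hnum (by positivity) hden

theorem pow_succ_le_mul_sum_layerEdgeCount_pow (hv : 1 ≤ v) (m n : ℕ) :
    (n : ℝ) ^ (m + 1) ≤ (m + 1) * ∑ k ∈ range (n + 1), layerEdgeCount v (n + 1) k ^ m := by
  have hreflect :
      ∑ j ∈ range (n + 1), (j : ℝ) ^ m = ∑ k ∈ range (n + 1), ((n : ℝ) - k) ^ m := by
    rw [← sum_range_reflect]
    refine sum_congr rfl fun k hk => ?_
    rw [Nat.add_sub_cancel, Nat.cast_sub (mem_range_succ_iff.mp hk)]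
  calc (n : ℝ) ^ (m + 1) ≤ (m + 1) * ∑ j ∈ range (n + 1), (j : ℝ) ^ m :=
        pow_succ_le_mul_sum_range_pow m n
    _ ≤ (m + 1) * ∑ k ∈ range (n + 1), layerEdgeCount v (n + 1) k ^ m := by
      rw [hreflect]
      gcongr with k hk
      · exact sub_nonneg.2 (by exact_mod_cast mem_range_succ_iff.mp hk)
      · have := sub_le_layerEdgeCount hv (Nat.succ_le_succ (mem_range_succ_iff.mp hk))
        push_cast at this
        linarith

theorem sum_layerEdgeCount_pow_le (hv : 1 ≤ v) (m N : ℕ) (hp : 0 < 1 - (v - 1) * m) :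
    ∑ k ∈ range N, layerEdgeCount v N k ^ m ≤ (N : ℝ) ^ (m + 1) / (1 - (v - 1) * m) := by
  have hterm (k : ℕ) (hk : k ∈ range N) : layerEdgeCount v N k ^ m
      ≤ (N : ℝ) ^ (v * m) * ((k : ℝ) + 1) ^ ((1 - (v - 1) * m) - 1) := by
    calc layerEdgeCount v N k ^ m ≤ ((N : ℝ) ^ v / (k + 1 : ℝ) ^ (v - 1)) ^ m :=
          pow_le_pow_left₀ (layerEdgeCount_nonneg (by linarith) (mem_range.mp hk))
            (layerEdgeCount_le hv N k) m
      _ = (N : ℝ) ^ (v * m) * ((k : ℝ) + 1) ^ ((1 - (v - 1) * m) - 1) := by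
        rw [div_pow, ← rpow_natCast, ← rpow_natCast, ← rpow_mul (by positivity),
          ← rpow_mul (by positivity), div_eq_mul_inv, ← rpow_neg (by positivity)]
        ring_nf
  calc ∑ k ∈ range N, layerEdgeCount v N k ^ m
      ≤ ∑ k ∈ range N, (N : ℝ) ^ (v * m) * ((k : ℝ) + 1) ^ ((1 - (v - 1) * m) - 1) :=
        sum_le_sum hterm
    _ ≤ (N : ℝ) ^ (v * m) * ((N : ℝ) ^ (1 - (v - 1) * m) / (1 - (v - 1) * m)) := by
      rw [← mul_sum]
      exact mul_le_mul_of_nonneg_left (sum_range_add_one_rpow_sub_one_le hp (by nlinarith) N)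
        (by positivity)
    _ = (N : ℝ) ^ (m + 1) / (1 - (v - 1) * m) := by
      rw [mul_div_assoc', ← rpow_add' (by positivity) (by ring_nf; positivity), ← rpow_natCast]
      push_cast
      ring_nf

end layerEdgeCount

theorem cell_count_subcritical (l : ℕ) (hl : 2 ≤ l) (v : ℝ) (hv1 : 1 < v)
    (hv2 : v < l / (l - 1 : ℝ)) :
    ∃ c₁ c₂ : ℝ, 0 < c₁ ∧ 0 < c₂ ∧ ∀ N : ℕ, 2 ≤ N →
      c₁ * (N : ℝ) ^ l ≤
        (∑ k ∈ Finset.range N,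
          (((N : ℝ) ^ v - (k + 1 : ℝ) ^ v) / ((k + 1 : ℝ) ^ v - (k : ℝ) ^ v)) ^ (l - 1)) + 1 ∧
      (∑ k ∈ Finset.range N,
          (((N : ℝ) ^ v - (k + 1 : ℝ) ^ v) / ((k + 1 : ℝ) ^ v - (k : ℝ) ^ v)) ^ (l - 1)) + 1
        ≤ c₂ * (N : ℝ) ^ l := by
  obtain ⟨m, rfl⟩ : ∃ m, l = m + 1 := ⟨l - 1, by omega⟩
  have hm : (0 : ℝ) < m := by exact_mod_cast (by omega : 0 < m)
  have hp : 0 < 1 - (v - 1) * m := by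
    push_cast at hv2
    rw [add_sub_cancel_right, lt_div_iff₀ hm] at hv2
    linarith
  refine ⟨1 / ((m + 1) * 2 ^ (m + 1)), 1 / (1 - (v - 1) * m) + 1, by positivity, by positivity,
    fun N hN => ?_⟩
  obtain ⟨n, rfl⟩ : ∃ n, N = n + 1 := ⟨N - 1, by omega⟩
  have hlow := pow_succ_le_mul_sum_layerEdgeCount_pow hv1.le m n
  have hupp := sum_layerEdgeCount_pow_le hv1.le m (n + 1) hp
  simp only [layerEdgeCount, Nat.add_sub_cancel] at hlow hupp ⊢
  have hn : (1 : ℝ) ≤ n := by exact_mod_cast (by omega : 1 ≤ n)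
  have hhalf : ((n + 1 : ℕ) : ℝ) / 2 ≤ n := by push_cast; linarith
  have hone : (1 : ℝ) ≤ ((n + 1 : ℕ) : ℝ) ^ (m + 1) := one_le_pow₀ (by simp)
  constructor
  · calc 1 / ((m + 1) * 2 ^ (m + 1)) * ((n + 1 : ℕ) : ℝ) ^ (m + 1)
        = (((n + 1 : ℕ) : ℝ) / 2) ^ (m + 1) / (m + 1) := by rw [div_pow]; field_simp
      _ ≤ (n : ℝ) ^ (m + 1) / (m + 1) := by gcongr
      _ ≤ _ := by rw [div_le_iff₀' (by positivity)]; linarith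
  · rw [add_mul, div_mul_eq_mul_div, one_mul]
    linarith
end

section
/- For integers $l \ge 2$, $N \ge 2$ and $v = l/(l-1)$, there exist constants $c_1, c_2 > 0$ depending only on $l$ such that $c_1 N^l \ln N \le \sum_{k=1}^{N-1} \left( \frac{N^v - k^v}{(k+1)^v - k^v} \right)^{l-1} \le c_2 N^l \ln N$. -/
/-!
Bernoulli's inequality gives `v k ^ (v - 1) ≤ (k + 1) ^ v - k ^ v ≤ v (k + 1) ^ (v - 1)`, so for
`1 ≤ v ≤ 2` the denominator is comparable to `k ^ (v - 1)`. Hence the `k`-th term is at most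
`(N ^ v / k ^ (v - 1)) ^ (l - 1) = N ^ l / k`, because `(v - 1)(l - 1) = 1`, and for `k ≤ N / 2`,
where the numerator is at least `N ^ v / 2`, it is at least `8 ^ -(l - 1) N ^ l / k`. The bounds
`log (n + 1) ≤ H n ≤ 1 + log n` on harmonic numbers turn the sums of `1 / k` into `log N`.
-/

open Finset Real

namespace CellCount

lemma rpow_add_mul_le_rpow_add {v y h : ℝ} (hv : 1 ≤ v) (hy : 0 < y) (hh : -y ≤ h) :
    y ^ v + v * y ^ (v - 1) * h ≤ (y + h) ^ v := by
  have hs : -1 ≤ h / y := by rwa [le_div_iff₀ hy, neg_one_mul]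
  have bernoulli := one_add_mul_self_le_rpow_one_add hs hv
  calc y ^ v + v * y ^ (v - 1) * h = y ^ v * (1 + v * (h / y)) := by
        rw [rpow_sub_one hy.ne']; field_simp
    _ ≤ y ^ v * (1 + h / y) ^ v := by gcongr
    _ = (y + h) ^ v := by
        rw [← mul_rpow hy.le (by linarith [(div_le_div_iff_of_pos_right hy).mpr hh])]
        congr 1; field_simp

lemma mul_rpow_sub_one_le_rpow_add_one_sub_rpow {v x : ℝ} (hv : 1 ≤ v) (hx : 0 < x) :
    v * x ^ (v - 1) ≤ (x + 1) ^ v - x ^ v := by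
  linarith [rpow_add_mul_le_rpow_add hv hx (h := 1) (by linarith)]

lemma rpow_add_one_sub_rpow_le_mul_rpow_sub_one {v x : ℝ} (hv : 1 ≤ v) (hx : 0 ≤ x) :
    (x + 1) ^ v - x ^ v ≤ v * (x + 1) ^ (v - 1) := by
  have := rpow_add_mul_le_rpow_add hv (by linarith : 0 < x + 1) (h := -1) (by linarith)
  rw [add_neg_cancel_right] at this
  linarith

lemma rpow_add_one_sub_rpow_le_four_mul {v x : ℝ} (hv₁ : 1 ≤ v) (hv₂ : v ≤ 2) (hx : 1 ≤ x) :
    (x + 1) ^ v - x ^ v ≤ 4 * x ^ (v - 1) := by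
  have htwo : (2 : ℝ) ^ (v - 1) ≤ 2 := by
    simpa using rpow_le_rpow_of_exponent_le (by norm_num : (1 : ℝ) ≤ 2) (by linarith : v - 1 ≤ 1)
  calc (x + 1) ^ v - x ^ v ≤ v * (x + 1) ^ (v - 1) :=
        rpow_add_one_sub_rpow_le_mul_rpow_sub_one hv₁ (by linarith)
    _ ≤ 2 * (2 * x) ^ (v - 1) := by gcongr; linarith
    _ = 2 * 2 ^ (v - 1) * x ^ (v - 1) := by rw [mul_rpow zero_le_two (by linarith)]; ring
    _ ≤ 4 * x ^ (v - 1) := by nlinarith [rpow_nonneg (by linarith : (0 : ℝ) ≤ x) (v - 1)]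

lemma rpow_le_rpow_div_two {v k x : ℝ} (hv : 1 ≤ v) (hk : 0 ≤ k) (hkx : 2 * k ≤ x) :
    k ^ v ≤ x ^ v / 2 := by
  have htwo : (2 : ℝ) ≤ 2 ^ v := by
    simpa using rpow_le_rpow_of_exponent_le (by norm_num : (1 : ℝ) ≤ 2) hv
  calc k ^ v ≤ (x / 2) ^ v := by gcongr; linarith
    _ = x ^ v / 2 ^ v := div_rpow (by linarith) zero_le_two v
    _ ≤ x ^ v / 2 := by gcongr; exact rpow_nonneg (by linarith) v

noncomputable def cellRatio (v x k : ℝ) : ℝ := (x ^ v - k ^ v) / ((k + 1) ^ v - k ^ v)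

lemma cellRatio_nonneg {v x k : ℝ} (hv : 0 ≤ v) (hk : 0 ≤ k) (hkx : k ≤ x) :
    0 ≤ cellRatio v x k :=
  div_nonneg (by linarith [rpow_le_rpow hk hkx hv])
    (by linarith [rpow_le_rpow hk (by linarith : k ≤ k + 1) hv])

lemma cellRatio_le {v x k : ℝ} (hv : 1 ≤ v) (hx : 0 ≤ x) (hk : 0 < k) :
    cellRatio v x k ≤ x ^ v / k ^ (v - 1) := by
  have hden := mul_rpow_sub_one_le_rpow_add_one_sub_rpow hv hk
  have hpos : 0 < k ^ (v - 1) := rpow_pos_of_pos hk _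
  refine div_le_div₀ (rpow_nonneg hx v) ?_ hpos (by nlinarith)
  linarith [rpow_nonneg hk.le v]

lemma le_cellRatio {v x k : ℝ} (hv₁ : 1 ≤ v) (hv₂ : v ≤ 2) (hk : 1 ≤ k) (hkx : 2 * k ≤ x) :
    x ^ v / (8 * k ^ (v - 1)) ≤ cellRatio v x k := by
  have hnum := rpow_le_rpow_div_two hv₁ (by linarith) hkx
  have hden := mul_rpow_sub_one_le_rpow_add_one_sub_rpow hv₁ (by linarith : 0 < k)
  have hpos : 0 < k ^ (v - 1) := rpow_pos_of_pos (by linarith) _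
  calc x ^ v / (8 * k ^ (v - 1)) = (x ^ v / 2) / (4 * k ^ (v - 1)) := by ring
    _ ≤ cellRatio v x k :=
      div_le_div₀ (by linarith [rpow_nonneg (by linarith : (0 : ℝ) ≤ k) v]) (by linarith)
        (by nlinarith) (rpow_add_one_sub_rpow_le_four_mul hv₁ hv₂ hk)

lemma rpow_div_rpow_sub_one_pow {v x k : ℝ} {n : ℕ} (hvn : (v - 1) * n = 1) (hx : 0 ≤ x)
    (hk : 0 ≤ k) : (x ^ v / k ^ (v - 1)) ^ n = x ^ (n + 1) / k := by
  have hv : v * n = (n + 1 : ℕ) := by push_cast; linarith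
  rw [div_pow, ← rpow_mul_natCast hx, ← rpow_mul_natCast hk, hv, hvn, rpow_natCast, rpow_one]

lemma sum_cellRatio_pow_le {v : ℝ} {n : ℕ} (hv : 1 ≤ v) (hvn : (v - 1) * n = 1) (N : ℕ) :
    ∑ k ∈ Icc 1 (N - 1), cellRatio v N k ^ n ≤
      (N : ℝ) ^ (n + 1) * ∑ k ∈ Icc 1 (N - 1), (k : ℝ)⁻¹ := by
  rw [mul_sum]
  refine sum_le_sum fun k hk => ?_
  have hk₁ : (1 : ℝ) ≤ k := by exact_mod_cast (mem_Icc.1 hk).1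
  have hkN : (k : ℝ) ≤ N := by exact_mod_cast (mem_Icc.1 hk).2.trans (Nat.sub_le N 1)
  calc cellRatio v N k ^ n ≤ ((N : ℝ) ^ v / (k : ℝ) ^ (v - 1)) ^ n :=
        pow_le_pow_left₀ (cellRatio_nonneg (by linarith) (by linarith) hkN)
          (cellRatio_le hv (Nat.cast_nonneg N) (by linarith)) n
    _ = (N : ℝ) ^ (n + 1) * (k : ℝ)⁻¹ := by
        rw [rpow_div_rpow_sub_one_pow hvn (Nat.cast_nonneg N) (Nat.cast_nonneg k), div_eq_mul_inv]

lemma sum_cellRatio_pow_ge {v : ℝ} {n : ℕ} (hv₁ : 1 ≤ v) (hv₂ : v ≤ 2) (hvn : (v - 1) * n = 1)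
    (N : ℕ) : (N : ℝ) ^ (n + 1) / 8 ^ n * ∑ k ∈ Icc 1 (N / 2), (k : ℝ)⁻¹ ≤
      ∑ k ∈ Icc 1 (N - 1), cellRatio v N k ^ n := by
  calc (N : ℝ) ^ (n + 1) / 8 ^ n * ∑ k ∈ Icc 1 (N / 2), (k : ℝ)⁻¹
      ≤ ∑ k ∈ Icc 1 (N / 2), cellRatio v N k ^ n := by
        rw [mul_sum]
        refine sum_le_sum fun k hk => ?_
        have hk₁ : (1 : ℝ) ≤ k := by exact_mod_cast (mem_Icc.1 hk).1
        have hkN : 2 * (k : ℝ) ≤ N := by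
          have := (mem_Icc.1 hk).2
          exact_mod_cast (by omega : 2 * k ≤ N)
        calc (N : ℝ) ^ (n + 1) / 8 ^ n * (k : ℝ)⁻¹
            = ((N : ℝ) ^ v / (8 * (k : ℝ) ^ (v - 1))) ^ n := by
              rw [mul_comm 8, ← div_div, div_pow _ (8 : ℝ),
                rpow_div_rpow_sub_one_pow hvn (Nat.cast_nonneg N) (Nat.cast_nonneg k)]
              ring
          _ ≤ cellRatio v N k ^ n :=
              pow_le_pow_left₀ (by positivity) (le_cellRatio hv₁ hv₂ hk₁ hkN) n
    _ ≤ ∑ k ∈ Icc 1 (N - 1), cellRatio v N k ^ n :=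
        sum_le_sum_of_subset_of_nonneg (Icc_subset_Icc_right (by omega)) fun k hk _ =>
          pow_nonneg (cellRatio_nonneg (by linarith) (Nat.cast_nonneg k)
            (by exact_mod_cast (mem_Icc.1 hk).2.trans (Nat.sub_le N 1))) n

lemma sum_Icc_inv_eq_harmonic (n : ℕ) : ∑ k ∈ Icc 1 n, (k : ℝ)⁻¹ = harmonic n := by
  simp [harmonic_eq_sum_Icc]

lemma log_le_two_mul_sum_Icc_inv (N : ℕ) : log N ≤ 2 * ∑ k ∈ Icc 1 (N / 2), (k : ℝ)⁻¹ := by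
  rcases Nat.eq_zero_or_pos N with rfl | hN
  · simp
  have hsq : (N : ℝ) ≤ ((N / 2 + 1 : ℕ) : ℝ) ^ 2 := by
    exact_mod_cast (by nlinarith [Nat.lt_div_mul_add (a := N) two_pos] : N ≤ (N / 2 + 1) ^ 2)
  calc log N ≤ log (((N / 2 + 1 : ℕ) : ℝ) ^ 2) := log_le_log (by exact_mod_cast hN) hsq
    _ = 2 * log ((N / 2 + 1 : ℕ) : ℝ) := by rw [log_pow]; norm_num
    _ ≤ 2 * ∑ k ∈ Icc 1 (N / 2), (k : ℝ)⁻¹ := by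
        rw [sum_Icc_inv_eq_harmonic]; gcongr; exact log_add_one_le_harmonic _

lemma sum_Icc_inv_le_three_mul_log {N : ℕ} (hN : 2 ≤ N) :
    ∑ k ∈ Icc 1 (N - 1), (k : ℝ)⁻¹ ≤ 3 * log N := by
  have hlog : log 2 ≤ log N := log_le_log two_pos (by exact_mod_cast hN)
  have hlog' : log ((N - 1 : ℕ) : ℝ) ≤ log N :=
    log_le_log (by exact_mod_cast (by omega : 0 < N - 1)) (by exact_mod_cast Nat.sub_le N 1)
  rw [sum_Icc_inv_eq_harmonic]
  linarith [harmonic_le_one_add_log (N - 1), log_two_gt_d9]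

end CellCount

open CellCount in
theorem cell_count_critical (l : ℕ) (hl : 2 ≤ l) :
    ∃ c₁ c₂ : ℝ, 0 < c₁ ∧ 0 < c₂ ∧ ∀ N : ℕ, 2 ≤ N →
      c₁ * (N : ℝ) ^ l * Real.log N ≤
        ∑ k ∈ Finset.Icc 1 (N - 1),
          (((N : ℝ) ^ ((l : ℝ) / (l - 1)) - (k : ℝ) ^ ((l : ℝ) / (l - 1))) /
            ((k + 1 : ℝ) ^ ((l : ℝ) / (l - 1)) - (k : ℝ) ^ ((l : ℝ) / (l - 1)))) ^ (l - 1) ∧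
      ∑ k ∈ Finset.Icc 1 (N - 1),
          (((N : ℝ) ^ ((l : ℝ) / (l - 1)) - (k : ℝ) ^ ((l : ℝ) / (l - 1))) /
            ((k + 1 : ℝ) ^ ((l : ℝ) / (l - 1)) - (k : ℝ) ^ ((l : ℝ) / (l - 1)))) ^ (l - 1)
        ≤ c₂ * (N : ℝ) ^ l * Real.log N := by
  have hl' : (2 : ℝ) ≤ l := by exact_mod_cast hl
  have hn : ((l - 1 : ℕ) : ℝ) = l - 1 := by rw [Nat.cast_sub (by omega), Nat.cast_one]
  have hv₁ : 1 ≤ (l : ℝ) / (l - 1) := by rw [le_div_iff₀ (by linarith)]; linarith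
  have hv₂ : (l : ℝ) / (l - 1) ≤ 2 := by rw [div_le_iff₀ (by linarith)]; linarith
  have hvn : ((l : ℝ) / (l - 1) - 1) * (l - 1 : ℕ) = 1 := by
    rw [hn]; field_simp [(by linarith : (l : ℝ) - 1 ≠ 0)]; ring
  have hl₁ : l - 1 + 1 = l := by omega
  refine ⟨1 / (2 * 8 ^ (l - 1)), 3, by positivity, by norm_num, fun N hN => ⟨?_, ?_⟩⟩
  · calc 1 / (2 * 8 ^ (l - 1)) * (N : ℝ) ^ l * log N
        = (N : ℝ) ^ l / 8 ^ (l - 1) * (log N / 2) := by ring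
      _ ≤ (N : ℝ) ^ l / 8 ^ (l - 1) * ∑ k ∈ Icc 1 (N / 2), (k : ℝ)⁻¹ := by
          gcongr
          linarith [log_le_two_mul_sum_Icc_inv N]
      _ ≤ _ := hl₁ ▸ sum_cellRatio_pow_ge hv₁ hv₂ hvn N
  · calc _ ≤ (N : ℝ) ^ l * ∑ k ∈ Icc 1 (N - 1), (k : ℝ)⁻¹ :=
          hl₁ ▸ sum_cellRatio_pow_le hv₁ hvn N
      _ ≤ (N : ℝ) ^ l * (3 * log N) := by gcongr; exact sum_Icc_inv_le_three_mul_log hN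
      _ = 3 * (N : ℝ) ^ l * log N := by ring
end

section
/- Let $r, u \ge 1$ be integers, $s = r + \gamma$ with $\gamma \ge 1$ an integer, $v = s/(s-\gamma)$, and $N \ge 2$. For $1 \le k \le N-1$ set $M_k = \lceil (\ln(N/k))^{(u-1)/s} \rceil$ and $h_k = ((k+1)/N)^v - (k/N)^v$. Then there is a constant $c$ depending only on $r, u, \gamma$ such that for all $1 \le k \le N-1$: $\left( \frac{h_k}{M_k} \right)^s \left( \frac{N}{k} \right)^{v\gamma} \left( 1 + \left( \ln \frac{N}{k} \right)^{u-1} \right) \le \frac{c}{N^s}$. -/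
/-! On the graded mesh `x_k = (k/N)^v`, convexity of `t ↦ t^v` gives
`h_k ≤ (2^v - 1) (k/N)^(v-1) / N`, and `(v - 1) s = v γ` makes the powers of `k/N` cancel
exactly in `h_k^s (N/k)^(vγ)`. The logarithmic factor is absorbed by the subdivision:
`M_k^s ≥ (ln (N/k))^(u-1)` and `M_k ≥ 1`. -/

open Real

lemma one_add_rpow_le_one_add_mul {v t : ℝ} (hv : 1 ≤ v) (ht₀ : 0 ≤ t) (ht₁ : t ≤ 1) :
    (1 + t) ^ v ≤ 1 + (2 ^ v - 1) * t := by
  have h := (convexOn_rpow hv).2 (Set.mem_Ici.2 zero_le_one) (Set.mem_Ici.2 zero_le_two)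
    (sub_nonneg.2 ht₁) ht₀ (sub_add_cancel 1 t)
  simp only [smul_eq_mul, one_rpow, mul_one] at h
  rw [show 1 + t = 1 - t + t * 2 by ring]
  linarith

lemma add_rpow_sub_rpow_le {v a d : ℝ} (hv : 1 ≤ v) (ha : 0 < a) (hd₀ : 0 ≤ d) (hd₁ : d ≤ a) :
    (a + d) ^ v - a ^ v ≤ (2 ^ v - 1) * a ^ (v - 1) * d := by
  have hchord := one_add_rpow_le_one_add_mul hv (div_nonneg hd₀ ha.le) ((div_le_one ha).2 hd₁)
  calc (a + d) ^ v - a ^ v = a ^ v * ((1 + d / a) ^ v - 1) := by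
        rw [mul_sub, ← mul_rpow ha.le (by positivity), mul_one_add, mul_div_cancel₀ _ ha.ne',
          mul_one]
    _ ≤ a ^ v * ((2 ^ v - 1) * (d / a)) := by gcongr; linarith
    _ = (2 ^ v - 1) * a ^ (v - 1) * d := by
        rw [rpow_sub_one ha.ne']; field_simp

lemma graded_step_pow_mul_le {v γ : ℝ} {s : ℕ} (hv : 1 ≤ v) (hvγ : (v - 1) * s = v * γ)
    {k N : ℝ} (hk : 1 ≤ k) (hN : 0 < N) :
    (((k + 1) / N) ^ v - (k / N) ^ v) ^ s * (N / k) ^ (v * γ) ≤ (2 ^ v - 1) ^ s / N ^ s := by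
  set x := k / N with hx
  have hx₀ : 0 < x := by positivity
  have hstep : ((k + 1) / N) ^ v - x ^ v ≤ (2 ^ v - 1) * x ^ (v - 1) * (1 / N) := by
    rw [add_div]
    exact add_rpow_sub_rpow_le hv hx₀ (by positivity) (div_le_div_of_nonneg_right hk hN.le)
  have hmono : x ^ v ≤ ((k + 1) / N) ^ v := by rw [hx]; gcongr; linarith
  calc (((k + 1) / N) ^ v - x ^ v) ^ s * (N / k) ^ (v * γ)
      ≤ ((2 ^ v - 1) * x ^ (v - 1) * (1 / N)) ^ s * (x ^ (v * γ))⁻¹ := by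
        rw [show N / k = x⁻¹ by rw [hx, inv_div], inv_rpow hx₀.le]
        gcongr
    _ = (2 ^ v - 1) ^ s / N ^ s := by
        rw [mul_pow, mul_pow, ← rpow_natCast (x ^ (v - 1)), ← rpow_mul hx₀.le, hvγ]
        field_simp [(rpow_pos_of_pos hx₀ (v * γ)).ne']
        rw [one_div, inv_pow, inv_mul_cancel_right₀ (pow_ne_zero _ hN.ne')]

lemma pow_le_natCeil_rpow_div_pow {L : ℝ} (hL : 0 ≤ L) (n : ℕ) {s : ℕ} (hs : s ≠ 0) :
    L ^ n ≤ (⌈L ^ ((n : ℝ) / s)⌉₊ : ℝ) ^ s :=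
  calc L ^ n = (L ^ ((n : ℝ) / s)) ^ s := by
        rw [← rpow_natCast _ s, ← rpow_mul hL, div_mul_cancel₀ _ (Nat.cast_ne_zero.2 hs),
          rpow_natCast]
    _ ≤ _ := pow_le_pow_left₀ (rpow_nonneg hL _) (Nat.le_ceil _) s

lemma one_add_pow_le_two_mul_natCeil_rpow_div_pow {L : ℝ} (hL : 0 < L) (n : ℕ) {s : ℕ}
    (hs : s ≠ 0) : 1 + L ^ n ≤ 2 * (⌈L ^ ((n : ℝ) / s)⌉₊ : ℝ) ^ s := by
  have hM : (1 : ℝ) ≤ (⌈L ^ ((n : ℝ) / s)⌉₊ : ℝ) ^ s :=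
    one_le_pow₀ (Nat.one_le_cast.2 (Nat.one_le_ceil_iff.2 (rpow_pos_of_pos hL _)))
  linarith [pow_le_natCeil_rpow_div_pow hL.le n hs]

theorem local_interpolation_error_refined_general (r u γ : ℕ) (hr : 1 ≤ r) (hu : 1 ≤ u) :
    ∃ c : ℝ, 0 < c ∧ ∀ N : ℕ, 2 ≤ N → ∀ k : ℕ, 1 ≤ k → k ≤ N - 1 →
      ((((k + 1 : ℝ) / N) ^ ((r + γ : ℝ) / r) - ((k : ℝ) / N) ^ ((r + γ : ℝ) / r)) /
            (⌈(Real.log ((N : ℝ) / k)) ^ ((u - 1 : ℝ) / (r + γ))⌉₊ : ℝ)) ^ (r + γ) *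
          ((N : ℝ) / k) ^ (((r + γ : ℝ) / r) * γ) *
          (1 + (Real.log ((N : ℝ) / k)) ^ (u - 1))
        ≤ c / (N : ℝ) ^ (r + γ) := by
  have hr₀ : (0 : ℝ) < r := Nat.cast_pos.2 hr
  set v : ℝ := (r + γ : ℝ) / r
  have hv : 1 ≤ v := (le_div_iff₀ hr₀).2 (by simp)
  have hvγ : (v - 1) * ((r + γ : ℕ) : ℝ) = v * γ := by simp only [v]; push_cast; field_simp; ring
  have hs : r + γ ≠ 0 := by omega
  have hexp : (u - 1 : ℝ) / (r + γ) = ((u - 1 : ℕ) : ℝ) / ((r + γ : ℕ) : ℝ) := by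
    push_cast [Nat.cast_sub hu]; rfl
  refine ⟨2 * (2 ^ v - 1) ^ (r + γ),
    mul_pos two_pos (pow_pos (sub_pos.2 (one_lt_rpow one_lt_two (by positivity))) _), ?_⟩
  intro N hN k hk hkN
  have hN₀ : (0 : ℝ) < N := by positivity
  have hL : 0 < log ((N : ℝ) / k) :=
    log_pos ((one_lt_div (by positivity)).2 (by exact_mod_cast (by omega : k < N)))
  have hlog := one_add_pow_le_two_mul_natCeil_rpow_div_pow hL (u - 1) hs
  have hmesh := graded_step_pow_mul_le hv hvγ (Nat.one_le_cast.2 hk) hN₀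
  rw [hexp, div_pow]
  calc _ = _ * ((1 + log ((N : ℝ) / k) ^ (u - 1)) / _) := by ring
    _ ≤ (2 ^ v - 1) ^ (r + γ) / (N : ℝ) ^ (r + γ) * 2 :=
        mul_le_mul hmesh ((div_le_iff₀ (by positivity)).2 hlog) (by positivity)
          (div_nonneg (pow_nonneg (sub_nonneg.2 (one_le_rpow one_le_two (by positivity))) _)
            (by positivity))
    _ = _ := by ring

theorem local_interpolation_error_refined (r u γ : ℕ) (hr : 1 ≤ r) (hu : 1 ≤ u) (hγ : 1 ≤ γ) :
    ∃ c : ℝ, 0 < c ∧ ∀ N : ℕ, 2 ≤ N → ∀ k : ℕ, 1 ≤ k → k ≤ N - 1 →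
      ((((k + 1 : ℝ) / N) ^ ((r + γ : ℝ) / r) - ((k : ℝ) / N) ^ ((r + γ : ℝ) / r)) /
            (⌈(Real.log ((N : ℝ) / k)) ^ ((u - 1 : ℝ) / (r + γ))⌉₊ : ℝ)) ^ (r + γ) *
          ((N : ℝ) / k) ^ (((r + γ : ℝ) / r) * γ) *
          (1 + (Real.log ((N : ℝ) / k)) ^ (u - 1))
        ≤ c / (N : ℝ) ^ (r + γ) :=
  local_interpolation_error_refined_general r u γ hr hu
end

section
/- Let $l \ge 2$, $N \ge 2$ be integers and $v > l/(l-1)$ real. Then there exist constants $c_1, c_2 > 0$ depending only on $l, v$ such that $c_1 N^{v(l-1)} \le \sum_{k=0}^{N-1} \left( \frac{N^v - (k+1)^v}{(k+1)^v - k^v} + 1 \right)^{l-1} \le c_2 N^{v(l-1)}$. -/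
/-!
Adding the `+ 1` into the fraction, the `k`-th base is `(N^v - k^v) / ((k+1)^v - k^v)`. For `k = 0`
it equals `N^v`, which gives the lower bound. For `k ≥ 1`, Bernoulli's inequality gives
`(k+1)^v - k^v ≥ v k^(v-1) ≥ k^(v-1)`, so the `k`-th term is at most `N^(v(l-1)) / k^((v-1)(l-1))`;
since `(v-1)(l-1) > 1` these bounds sum to `N^(v(l-1))` times a convergent `p`-series.
-/

open Finset

namespace CellCount

theorem mul_rpow_sub_one_le_add_one_rpow_sub_rpow {x v : ℝ} (hx : 0 < x) (hv : 1 ≤ v) :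
    v * x ^ (v - 1) ≤ (x + 1) ^ v - x ^ v := by
  have hbernoulli : 1 + v * x⁻¹ ≤ (1 + x⁻¹) ^ v :=
    one_add_mul_self_le_rpow_one_add (by linarith [inv_pos.mpr hx]) hv
  have hfactor : (x + 1) ^ v = x ^ v * (1 + x⁻¹) ^ v := by
    rw [← Real.mul_rpow hx.le (by positivity)]
    congr 1
    field_simp
  have hshift : x ^ v * x⁻¹ = x ^ (v - 1) := by
    rw [Real.rpow_sub_one hx.ne', div_eq_mul_inv]
  have hxv : 0 < x ^ v := Real.rpow_pos_of_pos hx v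
  calc v * x ^ (v - 1) = x ^ v * (1 + v * x⁻¹) - x ^ v := by rw [← hshift]; ring
    _ ≤ x ^ v * (1 + x⁻¹) ^ v - x ^ v := by gcongr
    _ = (x + 1) ^ v - x ^ v := by rw [hfactor]

noncomputable def layerRatio (N v : ℝ) (k : ℕ) : ℝ :=
  (N ^ v - (k + 1 : ℝ) ^ v) / ((k + 1 : ℝ) ^ v - (k : ℝ) ^ v) + 1

section

variable {N v : ℝ} {k : ℕ}

theorem rpow_lt_add_one_rpow (hv : 0 < v) (k : ℕ) : (k : ℝ) ^ v < (k + 1 : ℝ) ^ v :=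
  Real.rpow_lt_rpow k.cast_nonneg (lt_add_one _) hv

theorem layerRatio_eq (hv : 0 < v) :
    layerRatio N v k = (N ^ v - (k : ℝ) ^ v) / ((k + 1 : ℝ) ^ v - (k : ℝ) ^ v) := by
  have hgap := sub_pos.mpr (rpow_lt_add_one_rpow hv k)
  rw [layerRatio]
  field_simp
  ring

theorem layerRatio_zero (hv : 0 < v) : layerRatio N v 0 = N ^ v := by
  simp [layerRatio_eq hv, Real.zero_rpow hv.ne']

theorem layerRatio_nonneg (hv : 0 < v) (hkN : (k : ℝ) ≤ N) : 0 ≤ layerRatio N v k := by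
  rw [layerRatio_eq hv]
  have hpow : (k : ℝ) ^ v ≤ N ^ v := Real.rpow_le_rpow k.cast_nonneg hkN hv.le
  exact div_nonneg (sub_nonneg.mpr hpow) (sub_nonneg.mpr (rpow_lt_add_one_rpow hv k).le)

theorem layerRatio_le (hv : 1 ≤ v) (hN : 0 ≤ N) (hk : 0 < k) :
    layerRatio N v k ≤ N ^ v / (k : ℝ) ^ (v - 1) := by
  have hk' : (0 : ℝ) < k := Nat.cast_pos.mpr hk
  have hpos : 0 < (k : ℝ) ^ (v - 1) := Real.rpow_pos_of_pos hk' _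
  have hgap : (k : ℝ) ^ (v - 1) ≤ (k + 1 : ℝ) ^ v - (k : ℝ) ^ v :=
    calc (k : ℝ) ^ (v - 1) ≤ v * (k : ℝ) ^ (v - 1) := le_mul_of_one_le_left hpos.le hv
      _ ≤ _ := mul_rpow_sub_one_le_add_one_rpow_sub_rpow hk' hv
  rw [layerRatio_eq (by linarith)]
  refine div_le_div₀ (Real.rpow_nonneg hN v) ?_ hpos hgap
  linarith [Real.rpow_nonneg hk'.le v]

theorem layerRatio_pow_le (hv : 1 ≤ v) (hkN : (k : ℝ) ≤ N) (hk : 0 < k) (m : ℕ) :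
    layerRatio N v k ^ m ≤ N ^ (v * m) / (k : ℝ) ^ ((v - 1) * m) := by
  have hN : 0 ≤ N := k.cast_nonneg.trans hkN
  calc layerRatio N v k ^ m ≤ (N ^ v / (k : ℝ) ^ (v - 1)) ^ m :=
        pow_le_pow_left₀ (layerRatio_nonneg (by linarith) hkN) (layerRatio_le hv hN hk) m
    _ = N ^ (v * m) / (k : ℝ) ^ ((v - 1) * m) := by
        rw [div_pow, ← Real.rpow_natCast, ← Real.rpow_natCast (_ ^ (v - 1)),
          ← Real.rpow_mul hN, ← Real.rpow_mul k.cast_nonneg]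

end

theorem rpow_le_sum_layerRatio_pow {v : ℝ} (hv : 0 < v) (m : ℕ) {N : ℕ} (hN : 1 ≤ N) :
    (N : ℝ) ^ (v * m) ≤ ∑ k ∈ range N, layerRatio N v k ^ m := by
  have hterm_nonneg : ∀ k ∈ range N, 0 ≤ layerRatio N v k ^ m := fun k hk =>
    pow_nonneg (layerRatio_nonneg hv (by exact_mod_cast (mem_range.mp hk).le)) m
  calc (N : ℝ) ^ (v * m) = layerRatio N v 0 ^ m := by
        rw [layerRatio_zero hv, Real.rpow_mul N.cast_nonneg, Real.rpow_natCast]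
    _ ≤ ∑ k ∈ range N, layerRatio N v k ^ m :=
        single_le_sum hterm_nonneg (mem_range.mpr hN)

theorem sum_layerRatio_pow_le {v : ℝ} (hv : 1 ≤ v) {m : ℕ} (hs : 1 < (v - 1) * m) (N : ℕ) :
    ∑ k ∈ range N, layerRatio N v k ^ m ≤
      (1 + ∑' n : ℕ, 1 / (n + 1 : ℝ) ^ ((v - 1) * m)) * (N : ℝ) ^ (v * m) := by
  set s := (v - 1) * m
  have hsummable : Summable fun n : ℕ => 1 / (n + 1 : ℝ) ^ s := by
    have := (summable_nat_add_iff 1).mpr (Real.summable_one_div_nat_rpow.mpr hs)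
    simpa using this
  rcases Nat.eq_zero_or_eq_succ_pred N with rfl | hN
  · simp only [range_zero, sum_empty]
    have : 0 ≤ ∑' n : ℕ, 1 / (n + 1 : ℝ) ^ s := tsum_nonneg fun n => by positivity
    positivity
  have htail : ∀ i ∈ range (N - 1), layerRatio N v (i + 1) ^ m ≤
      (N : ℝ) ^ (v * m) * (1 / (i + 1 : ℝ) ^ s) := fun i hi => by
    have hiN : ((i + 1 : ℕ) : ℝ) ≤ N := by
      have := mem_range.mp hi
      exact_mod_cast (by omega : i + 1 ≤ N)
    have := layerRatio_pow_le hv hiN i.succ_pos m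
    push_cast at this
    rwa [mul_one_div]
  rw [hN, sum_range_succ', ← hN, layerRatio_zero (by linarith), ← Real.rpow_natCast,
    ← Real.rpow_mul N.cast_nonneg]
  calc ∑ i ∈ range (N - 1), layerRatio N v (i + 1) ^ m + (N : ℝ) ^ (v * m)
      ≤ ∑ i ∈ range (N - 1), (N : ℝ) ^ (v * m) * (1 / (i + 1 : ℝ) ^ s) + (N : ℝ) ^ (v * m) := by
        gcongr with i hi
        exact htail i hi
    _ = (N : ℝ) ^ (v * m) * ∑ i ∈ range (N - 1), 1 / (i + 1 : ℝ) ^ s + (N : ℝ) ^ (v * m) := by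
        rw [mul_sum]
    _ ≤ (N : ℝ) ^ (v * m) * ∑' n : ℕ, 1 / (n + 1 : ℝ) ^ s + (N : ℝ) ^ (v * m) := by
        gcongr
        exact hsummable.sum_le_tsum _ fun n _ => by positivity
    _ = _ := by ring

end CellCount

open CellCount in
theorem cell_count_supercritical (l : ℕ) (hl : 2 ≤ l) (v : ℝ)
    (hv : (l : ℝ) / (l - 1) < v) :
    ∃ c₁ c₂ : ℝ, 0 < c₁ ∧ 0 < c₂ ∧ ∀ N : ℕ, 2 ≤ N →
      c₁ * (N : ℝ) ^ (v * (l - 1)) ≤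
        ∑ k ∈ Finset.range N,
          (((N : ℝ) ^ v - (k + 1 : ℝ) ^ v) / ((k + 1 : ℝ) ^ v - (k : ℝ) ^ v) + 1) ^ (l - 1) ∧
      ∑ k ∈ Finset.range N,
          (((N : ℝ) ^ v - (k + 1 : ℝ) ^ v) / ((k + 1 : ℝ) ^ v - (k : ℝ) ^ v) + 1) ^ (l - 1)
        ≤ c₂ * (N : ℝ) ^ (v * (l - 1)) := by
  have hm : ((l - 1 : ℕ) : ℝ) = (l : ℝ) - 1 := by
    rw [Nat.cast_sub (by omega), Nat.cast_one]
  have hm_pos : (0 : ℝ) < (l : ℝ) - 1 := by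
    rw [← hm]; exact_mod_cast (by omega : 0 < l - 1)
  have hlv : (l : ℝ) < v * ((l : ℝ) - 1) := (div_lt_iff₀ hm_pos).mp hv
  have hv1 : 1 ≤ v := by nlinarith
  have hs : 1 < (v - 1) * ((l - 1 : ℕ) : ℝ) := by rw [hm]; linarith
  set C := ∑' n : ℕ, 1 / (n + 1 : ℝ) ^ ((v - 1) * ((l - 1 : ℕ) : ℝ))
  have hC : 0 ≤ C := tsum_nonneg fun n => by positivity
  refine ⟨1, 1 + C, one_pos, by positivity, fun N hN => ?_⟩
  rw [← hm, one_mul]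
  exact ⟨rpow_le_sum_layerRatio_pow (by linarith) _ (by omega), sum_layerRatio_pow_le hv1 hs N⟩
end
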